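/- arXiv:1209.6589 — 3 statements merged into one kernel-verified Lean document; each statement's English description precedes it below -/
import Mathlib

section
/- Under the hypotheses that x_{m+1} = A_m x_m admits a general dichotomy with bounds (a_{m,n}) and (b_{m,n}), that the f_m are Lipschitz with f_m(0)=0, that α < +∞ and 2α + max{2β, √β} < 1, the unique sequence x^φ ∈ ℬ_n associated to φ ∈ 𝒳 and n ∈ ℕ satisfies ‖x^φ_m(ξ) − x^φ_m(ξ̄)‖ ≤ (1/(1 − 2α)) a_{m,n} ‖ξ − ξ̄‖ for every m ≥ n and every ξ, ξ̄ ∈ E_n. -/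
/-- `calA A m n` is the linear evolution operator
`𝒜_{m,n} = A_{m-1} ∘ ⋯ ∘ A_n` (and the identity if `m ≤ n`). -/
def calA {X : Type*} [NormedAddCommGroup X] [NormedSpace ℝ X]
    (A : ℕ → X →L[ℝ] X) : ℕ → ℕ → X →L[ℝ] X
  | 0, _ => ContinuousLinearMap.id ℝ X
  | m + 1, n => if m + 1 ≤ n then ContinuousLinearMap.id ℝ X else (A m).comp (calA A m n)

/-!
Put `Δₘ = x^φ_m(ξ) − x^φ_m(ξ̄)` and let `M` be the least constant with `‖Δₖ‖ ≤ M a_{k,n}` for all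
`k ≥ n`; it is finite because `x^φ ∈ ℬ_n`. Subtracting the two variation-of-constants formulas,
using (D1) and the fact that `u ↦ u + φ_k(u)` is `2`-Lipschitz, gives
`‖Δₘ‖ ≤ (‖ξ − ξ̄‖ + 2αM) a_{m,n}`. Hence `M ≤ ‖ξ − ξ̄‖ + 2αM`, i.e. `M ≤ ‖ξ − ξ̄‖ / (1 − 2α)`.
-/

theorem le_one_div_one_sub_mul_of_forall_le_mul {ι : Type*} {d w : ι → ℝ} (hw : ∀ i, 0 < w i)
    (hbdd : ∃ C, ∀ i, d i ≤ C * w i) {c θ : ℝ} (hθ : θ < 1)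
    (h : ∀ M, (∀ i, d i ≤ M * w i) → ∀ i, d i ≤ (c + θ * M) * w i) (i : ι) :
    d i ≤ 1 / (1 - θ) * (w i * c) := by
  obtain ⟨C, hC⟩ := hbdd
  have hbdd' : BddAbove (Set.range fun j => d j / w j) :=
    ⟨C, by rintro _ ⟨j, rfl⟩; exact (div_le_iff₀ (hw j)).2 (hC j)⟩
  set M := ⨆ j, d j / w j
  have hM : ∀ j, d j ≤ M * w j := fun j => (div_le_iff₀ (hw j)).1 (le_ciSup hbdd' j)
  have : Nonempty ι := ⟨i⟩
  have hMc : M ≤ c + θ * M := ciSup_le fun j => (div_le_iff₀ (hw j)).2 (h M hM j)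
  have hM' : M ≤ 1 / (1 - θ) * c := by
    rw [one_div_mul_eq_div, le_div_iff₀ (by linarith)]
    linarith
  calc d i ≤ M * w i := hM i
    _ ≤ 1 / (1 - θ) * c * w i := mul_le_mul_of_nonneg_right hM' (hw i).le
    _ = 1 / (1 - θ) * (w i * c) := by ring

theorem norm_add_sub_add_le_two_mul {E : Type*} [SeminormedAddCommGroup E] {u v p q : E}
    (h : ‖p - q‖ ≤ ‖u - v‖) : ‖(u + p) - (v + q)‖ ≤ 2 * ‖u - v‖ := by
  rw [add_sub_add_comm, two_mul]
  exact (norm_add_le _ _).trans (add_le_add_right h _)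

section VariationOfConstants

open Finset

variable {X : Type*} [NormedAddCommGroup X] [NormedSpace ℝ X] {U : ℕ → ℕ → X →L[ℝ] X}
  {P : ℕ → X →L[ℝ] X} {a : ℕ → ℕ → ℝ} {n : ℕ} {e e' : X}

theorem norm_sub_le_of_variation_of_constants
    (hUP : ∀ m n, n ≤ m → ‖(U m n).comp (P n)‖ ≤ a m n) {m : ℕ} (hnm : n ≤ m)
    (he : P n e = e) (he' : P n e' = e') {y y' : X} {w w' : ℕ → X}
    (hy : y = U m n e + ∑ k ∈ Ico n m, U m (k + 1) (P (k + 1) (w k)))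
    (hy' : y' = U m n e' + ∑ k ∈ Ico n m, U m (k + 1) (P (k + 1) (w' k))) :
    ‖y - y'‖ ≤ a m n * ‖e - e'‖ + ∑ k ∈ Ico n m, a m (k + 1) * ‖w k - w' k‖ := by
  have hsplit : y - y' = (U m n).comp (P n) (e - e') +
      ∑ k ∈ Ico n m, (U m (k + 1)).comp (P (k + 1)) (w k - w' k) := by
    simp only [hy, hy', ContinuousLinearMap.comp_apply, map_sub, he, he', sum_sub_distrib]
    abel
  rw [hsplit]
  refine (norm_add_le _ _).trans (add_le_add ?_ ((norm_sum_le _ _).trans (sum_le_sum ?_)))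
  · exact (U m n).comp (P n) |>.le_of_opNorm_le (hUP m n hnm) _
  · intro k hk
    exact (U m (k + 1)).comp (P (k + 1)) |>.le_of_opNorm_le (hUP m (k + 1) (mem_Ico.1 hk).2) _

theorem norm_sub_le_of_variation_of_constants_of_lipschitz
    (hUP : ∀ m n, n ≤ m → ‖(U m n).comp (P n)‖ ≤ a m n) (ha : ∀ m n, n ≤ m → 0 < a m n)
    {K : ℕ → ℝ} (hK : ∀ k, 0 ≤ K k) {θ : ℝ} (hθ : θ < 1)
    (hsum : ∀ m, n ≤ m → ∑ k ∈ Ico n m, a m (k + 1) * (a k n * K k) ≤ θ * a m n)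
    (he : P n e = e) (he' : P n e' = e') {y y' w w' : ℕ → X}
    (hy : ∀ m, n ≤ m → y m = U m n e + ∑ k ∈ Ico n m, U m (k + 1) (P (k + 1) (w k)))
    (hy' : ∀ m, n ≤ m → y' m = U m n e' + ∑ k ∈ Ico n m, U m (k + 1) (P (k + 1) (w' k)))
    (hw : ∀ k, ‖w k - w' k‖ ≤ K k * ‖y k - y' k‖)
    (hbdd : ∃ C, ∀ m, n ≤ m → ‖y m - y' m‖ ≤ C * a m n) {m : ℕ} (hnm : n ≤ m) :
    ‖y m - y' m‖ ≤ 1 / (1 - θ) * (a m n * ‖e - e'‖) := by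
  obtain ⟨C, hC⟩ := hbdd
  refine le_one_div_one_sub_mul_of_forall_le_mul (ι := {k // n ≤ k})
    (d := fun k => ‖y k - y' k‖) (w := fun k => a k n) (fun k => ha k n k.2)
    ⟨C, fun k => hC k k.2⟩ hθ ?_ ⟨m, hnm⟩
  rintro M hM ⟨m, hm⟩
  have hM0 : 0 ≤ M :=
    nonneg_of_mul_nonneg_left ((norm_nonneg _).trans (hM ⟨n, le_rfl⟩)) (ha n n le_rfl)
  calc ‖y m - y' m‖ ≤ a m n * ‖e - e'‖ + ∑ k ∈ Ico n m, a m (k + 1) * ‖w k - w' k‖ :=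
        norm_sub_le_of_variation_of_constants hUP hm he he' (hy m hm) (hy' m hm)
    _ ≤ a m n * ‖e - e'‖ + M * ∑ k ∈ Ico n m, a m (k + 1) * (a k n * K k) := by
        rw [mul_sum]
        refine add_le_add_right (sum_le_sum fun k hk => ?_) (a m n * ‖e - e'‖)
        obtain ⟨hnk, hkm⟩ := mem_Ico.1 hk
        calc a m (k + 1) * ‖w k - w' k‖ ≤ a m (k + 1) * (K k * (M * a k n)) := by
              gcongr
              · exact (ha m (k + 1) hkm).le
              · exact (hw k).trans (mul_le_mul_of_nonneg_left (hM ⟨k, hnk⟩) (hK k))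
          _ = M * (a m (k + 1) * (a k n * K k)) := by ring
    _ ≤ a m n * ‖e - e'‖ + M * (θ * a m n) := by gcongr; exact hsum m hm
    _ = (‖e - e'‖ + θ * M) * a m n := by ring

theorem sum_le_mul_of_mem_upperBounds {L : ℕ → ℝ} (ha : ∀ m n, n ≤ m → 0 < a m n)
    (hL : ∀ k, 0 ≤ L k) {α : ℝ}
    (hα : α ∈ upperBounds {r : ℝ | ∃ m n : ℕ, n < m ∧
      r = (∑ k ∈ Ico n m, a m (k + 1) * (a k n * L k)) / a m n})
    {m : ℕ} (hnm : n ≤ m) :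
    ∑ k ∈ Ico n m, a m (k + 1) * (a k n * L k) ≤ α * a m n := by
  have hsum_nonneg : ∀ m, 0 ≤ ∑ k ∈ Ico n m, a m (k + 1) * (a k n * L k) := fun m =>
    sum_nonneg fun k hk => by
      obtain ⟨hnk, hkm⟩ := mem_Ico.1 hk
      exact mul_nonneg (ha m (k + 1) hkm).le (mul_nonneg (ha k n hnk).le (hL k))
  rcases hnm.eq_or_lt with rfl | hlt
  · have hα0 : 0 ≤ α := (div_nonneg (hsum_nonneg (n + 1)) (ha (n + 1) n n.le_succ).le).trans
      (hα ⟨n + 1, n, n.lt_succ_self, rfl⟩)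
    simpa using mul_nonneg hα0 (ha n n le_rfl).le
  · exact (div_le_iff₀ (ha m n hnm)).1 (hα ⟨m, n, hlt, rfl⟩)

end VariationOfConstants

theorem xphi_lipschitz_general
    {X : Type*} [NormedAddCommGroup X] [NormedSpace ℝ X]
    (A P : ℕ → X →L[ℝ] X) (a : ℕ → ℕ → ℝ)
    -- the bounds are positive
    (ha : ∀ m n : ℕ, n ≤ m → 0 < a m n)
    -- the `P n` are bounded projections
    (hproj : ∀ n, (P n).comp (P n) = P n)
    -- (D1) : `‖𝒜_{m,n} P n‖ ≤ a m n`
    (hD1 : ∀ m n : ℕ, n ≤ m → ‖(calA A m n).comp (P n)‖ ≤ a m n)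
    -- the perturbations `f k` vanish at `0` and are Lipschitz with constant `L k`
    (f : ℕ → X → X) (L : ℕ → ℝ) (hL0 : ∀ k, 0 ≤ L k)
    (hLip : ∀ (k : ℕ) (u v : X), ‖f k u - f k v‖ ≤ L k * ‖u - v‖)
    -- `α = sup_{m>n} (1/a_{m,n}) ∑_{k=n}^{m-1} a_{m,k+1} a_{k,n} Lip(f k) < ∞`
    (α : ℝ)
    (hα : IsLUB {r : ℝ | ∃ m n : ℕ, n < m ∧
      r = (∑ k ∈ Finset.Ico n m, a m (k + 1) * (a k n * L k)) / a m n} α)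
    -- `β = sup_n ∑_{k=n}^{∞} b_{k+1,n} a_{k,n} Lip(f k) < ∞`
    (β : ℝ)
    -- `2α + max {2β, √β} < 1`
    (hcond : 2 * α + max (2 * β) (Real.sqrt β) < 1)
    (φ : ∀ n : ℕ, LinearMap.range (P n : X →ₗ[ℝ] X) → LinearMap.ker (P n : X →ₗ[ℝ] X))
    (hφ : ((∀ n, φ n 0 = 0) ∧
      ∀ (n : ℕ) (ξ ξ' : LinearMap.range (P n : X →ₗ[ℝ] X)),
        ‖(φ n ξ : X) - (φ n ξ' : X)‖ ≤ ‖(ξ : X) - (ξ' : X)‖))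
    (n : ℕ) (x : ∀ m : ℕ, LinearMap.range (P n : X →ₗ[ℝ] X) → LinearMap.range (P m : X →ₗ[ℝ] X))
    (hx : ((∀ m : ℕ, n ≤ m → x m 0 = 0) ∧
      (∃ C : ℝ, ∀ m : ℕ, n ≤ m → ∀ ξ : LinearMap.range (P n : X →ₗ[ℝ] X),
        ‖(x m ξ : X)‖ ≤ C * (a m n * ‖(ξ : X)‖)) ∧
      (∀ m : ℕ, n ≤ m → ∀ ξ : LinearMap.range (P n : X →ₗ[ℝ] X),
        (x m ξ : X) = calA A m n (ξ : X) +
          ∑ k ∈ Finset.Ico n m,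
            calA A m (k + 1) (P (k + 1) (f k ((x k ξ : X) + (φ k (x k ξ) : X)))))))
    :
    ∀ m : ℕ, n ≤ m → ∀ ξ ξ' : LinearMap.range (P n : X →ₗ[ℝ] X),
      ‖(x m ξ : X) - (x m ξ' : X)‖ ≤ 1 / (1 - 2 * α) * (a m n * ‖(ξ : X) - (ξ' : X)‖) := by
  obtain ⟨-, hφ⟩ := hφ
  obtain ⟨-, ⟨C, hC⟩, hx⟩ := hx
  intro m hm ξ ξ'
  have hfix : ∀ ζ : LinearMap.range (P n : X →ₗ[ℝ] X), P n ζ = ζ := by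
    rintro ⟨_, y, rfl⟩
    exact DFunLike.congr_fun (hproj n) y
  have h2α : 2 * α < 1 := by linarith [Real.sqrt_nonneg β, le_max_right (2 * β) (Real.sqrt β)]
  have hsum : ∀ m, n ≤ m →
      ∑ k ∈ Finset.Ico n m, a m (k + 1) * (a k n * (2 * L k)) ≤ 2 * α * a m n := fun m hm => by
    simp_rw [mul_left_comm _ (2 : ℝ), ← Finset.mul_sum, mul_assoc]
    exact mul_le_mul_of_nonneg_left (sum_le_mul_of_mem_upperBounds ha hL0 hα.1 hm) zero_le_two
  have hforcing : ∀ k, ‖f k (x k ξ + φ k (x k ξ) : X) - f k (x k ξ' + φ k (x k ξ') : X)‖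
      ≤ 2 * L k * ‖(x k ξ : X) - x k ξ'‖ := fun k =>
    calc _ ≤ L k * (2 * ‖(x k ξ : X) - x k ξ'‖) := (hLip k _ _).trans <|
          mul_le_mul_of_nonneg_left (norm_add_sub_add_le_two_mul (hφ k _ _)) (hL0 k)
      _ = _ := by ring
  have hbdd : ∃ C', ∀ m, n ≤ m → ‖(x m ξ : X) - (x m ξ' : X)‖ ≤ C' * a m n :=
    ⟨C * (‖(ξ : X)‖ + ‖(ξ' : X)‖), fun m hm =>
      (norm_sub_le _ _).trans (by linarith [hC m hm ξ, hC m hm ξ'])⟩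
  exact norm_sub_le_of_variation_of_constants_of_lipschitz hD1 ha (fun k => by linarith [hL0 k])
    h2α hsum (hfix ξ) (hfix ξ') (fun m hm => hx m hm ξ) (fun m hm => hx m hm ξ') hforcing hbdd hm

/-- Lipschitz estimate for the unique sequence `x^φ ∈ ℬ_n`. -/
theorem xphi_lipschitz
    {X : Type*} [NormedAddCommGroup X] [NormedSpace ℝ X] [CompleteSpace X]
    (A P : ℕ → X →L[ℝ] X) (B : ℕ → ℕ → X →L[ℝ] X) (a b : ℕ → ℕ → ℝ)
    -- the bounds are positive
    (ha : ∀ m n : ℕ, n ≤ m → 0 < a m n) (hb : ∀ m n : ℕ, n ≤ m → 0 < b m n)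
    -- the `P n` are bounded projections
    (hproj : ∀ n, (P n).comp (P n) = P n)
    -- (S1) : `P m ∘ 𝒜_{m,n} = 𝒜_{m,n} ∘ P n`
    (hS1 : ∀ m n : ℕ, n ≤ m → (P m).comp (calA A m n) = (calA A m n).comp (P n))
    -- (S2)/(S3) : `B m n` is the operator `(𝒜_{m,n}|_{F n})⁻¹ ∘ Q m`, where `Q m = Id - P m`;
    -- its existence encodes that `𝒜_{m,n}` maps `F n = ker (P n)` bijectively onto `F m`
    (hB1 : ∀ m n : ℕ, n ≤ m → ∀ x : X, calA A m n (B m n x) = x - P m x)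
    (hB2 : ∀ m n : ℕ, n ≤ m → ∀ x : X, B m n (calA A m n x) = x - P n x)
    (hBF : ∀ m n : ℕ, n ≤ m → ∀ x : X, P n (B m n x) = 0)
    -- (D1) : `‖𝒜_{m,n} P n‖ ≤ a m n`
    (hD1 : ∀ m n : ℕ, n ≤ m → ‖(calA A m n).comp (P n)‖ ≤ a m n)
    -- (D2) : `‖(𝒜_{m,n}|_{F n})⁻¹ Q m‖ ≤ b m n`
    (hD2 : ∀ m n : ℕ, n ≤ m → ‖B m n‖ ≤ b m n)
    -- the perturbations `f k` vanish at `0` and are Lipschitz with constant `L k`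
    (f : ℕ → X → X) (L : ℕ → ℝ) (hL0 : ∀ k, 0 ≤ L k) (hf0 : ∀ k, f k 0 = 0)
    (hLip : ∀ (k : ℕ) (u v : X), ‖f k u - f k v‖ ≤ L k * ‖u - v‖)
    -- `α = sup_{m>n} (1/a_{m,n}) ∑_{k=n}^{m-1} a_{m,k+1} a_{k,n} Lip(f k) < ∞`
    (α : ℝ)
    (hα : IsLUB {r : ℝ | ∃ m n : ℕ, n < m ∧
      r = (∑ k ∈ Finset.Ico n m, a m (k + 1) * (a k n * L k)) / a m n} α)
    -- `β = sup_n ∑_{k=n}^{∞} b_{k+1,n} a_{k,n} Lip(f k) < ∞`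
    (β : ℝ)
    (hsum : ∀ n : ℕ, Summable fun j : ℕ => b (n + j + 1) n * (a (n + j) n * L (n + j)))
    (hβ : IsLUB {r : ℝ | ∃ n : ℕ,
      r = ∑' j : ℕ, b (n + j + 1) n * (a (n + j) n * L (n + j))} β)
    -- `2α + max {2β, √β} < 1`
    (hcond : 2 * α + max (2 * β) (Real.sqrt β) < 1)
    (φ : ∀ n : ℕ, LinearMap.range (P n : X →ₗ[ℝ] X) → LinearMap.ker (P n : X →ₗ[ℝ] X))
    (hφ : ((∀ n, φ n 0 = 0) ∧
      ∀ (n : ℕ) (ξ ξ' : LinearMap.range (P n : X →ₗ[ℝ] X)),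
        ‖(φ n ξ : X) - (φ n ξ' : X)‖ ≤ ‖(ξ : X) - (ξ' : X)‖))
    (n : ℕ) (x : ∀ m : ℕ, LinearMap.range (P n : X →ₗ[ℝ] X) → LinearMap.range (P m : X →ₗ[ℝ] X))
    (hx : ((∀ m : ℕ, n ≤ m → x m 0 = 0) ∧
      (∃ C : ℝ, ∀ m : ℕ, n ≤ m → ∀ ξ : LinearMap.range (P n : X →ₗ[ℝ] X),
        ‖(x m ξ : X)‖ ≤ C * (a m n * ‖(ξ : X)‖)) ∧
      (∀ m : ℕ, n ≤ m → ∀ ξ : LinearMap.range (P n : X →ₗ[ℝ] X),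
        (x m ξ : X) = calA A m n (ξ : X) +
          ∑ k ∈ Finset.Ico n m,
            calA A m (k + 1) (P (k + 1) (f k ((x k ξ : X) + (φ k (x k ξ) : X)))))))
    :
    ∀ m : ℕ, n ≤ m → ∀ ξ ξ' : LinearMap.range (P n : X →ₗ[ℝ] X),
      ‖(x m ξ : X) - (x m ξ' : X)‖ ≤ 1 / (1 - 2 * α) * (a m n * ‖(ξ : X) - (ξ' : X)‖) :=
  xphi_lipschitz_general A P a ha hproj hD1 f L hL0 hLip α hα β hcond φ hφ n x hx
end

section
/- Suppose x_{m+1} = A_m x_m admits a general dichotomy with bounds (a_{m,n}) and (b_{m,n}), the f_m are Lipschitz with f_m(0)=0, lim_{m→∞} a_{m,n} b_{m,n} = 0 for every n, α < +∞, β < +∞, and 2α + max{2β, √β} < 1. Then for φ ∈ 𝒳 the following are equivalent: (a) for every n ∈ ℕ, every m ≥ n and every ξ ∈ E_n, φ_m(x^φ_{n,m}(ξ)) = 𝒜_{m,n} φ_n(ξ) + Σ_{k=n}^{m−1} 𝒜_{m,k+1} Q_{k+1} f_k(x^φ_{n,k}(ξ) + φ_k(x^φ_{n,k}(ξ))); (b)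 for every n ∈ ℕ and every ξ ∈ E_n, φ_n(ξ) = − Σ_{k=n}^{∞} (𝒜_{k+1,n}|_{F_n})^{−1} Q_{k+1} f_k(x^φ_{n,k}(ξ) + φ_k(x^φ_{n,k}(ξ))). -/
/-!
Apply `(𝒜_{m,n}|_{F_n})⁻¹ Q_m` to (a): the partial sums of the series in (b) become
`(𝒜_{m,n}|_{F_n})⁻¹ φ_m(x_{n,m} ξ) - φ_n ξ`, whose first term is `O(a_{m,n} b_{m,n}) → 0`.
Conversely, applying `𝒜_{m,n}` to the series (b) at time `n` and dropping its first `m - n`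
terms gives the series (b) at time `m`, evaluated along `x_{n,k} ξ`; this agrees with the
series at `x_{n,m} ξ` by the cocycle property `x_{m,k}(x_{n,m} ξ) = x_{n,k} ξ`, which holds
because both sides solve the same fixed-point equation, a contraction with constant `2α < 1`.
-/

open Finset Filter Topology

section Evolution

variable {X : Type*} [NormedAddCommGroup X] [NormedSpace ℝ X] (A : ℕ → X →L[ℝ] X)

lemma calA_self (n : ℕ) : calA A n n = ContinuousLinearMap.id ℝ X := by
  cases n with
  | zero => rfl
  | succ m => rw [calA, if_pos le_rfl]

lemma calA_succ {k n : ℕ} (h : n ≤ k) : calA A (k + 1) n = (A k).comp (calA A k n) := by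
  rw [calA, if_neg (by omega)]

lemma calA_comp_apply {j m k : ℕ} (hjm : j ≤ m) (hmk : m ≤ k) (v : X) :
    calA A k m (calA A m j v) = calA A k j v := by
  induction k, hmk using Nat.le_induction with
  | base => rw [calA_self]; rfl
  | succ k hk ih =>
    rw [calA_succ A hk, calA_succ A (hjm.trans hk), ContinuousLinearMap.comp_apply,
      ContinuousLinearMap.comp_apply, ih]

/-- `B m n` plays the role of `(𝒜_{m,n}|_{F_n})⁻¹ Q_m`. -/
structure IsInvariantSplitting (P : ℕ → X →L[ℝ] X) (B : ℕ → ℕ → X →L[ℝ] X) : Prop where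
  proj : ∀ n, (P n).comp (P n) = P n
  comm : ∀ m n, n ≤ m → (P m).comp (calA A m n) = (calA A m n).comp (P n)
  calA_B : ∀ m n, n ≤ m → ∀ v, calA A m n (B m n v) = v - P m v
  B_calA : ∀ m n, n ≤ m → ∀ v, B m n (calA A m n v) = v - P n v
  P_B : ∀ m n, n ≤ m → ∀ v, P n (B m n v) = 0

variable {A}

lemma calA_add_sum_restart {y h : ℕ → X} {ξ : X} {n : ℕ}
    (hy : ∀ k, n ≤ k → y k = calA A k n ξ + ∑ j ∈ Ico n k, calA A k (j + 1) (h j))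
    {m k : ℕ} (hnm : n ≤ m) (hmk : m ≤ k) :
    y k = calA A k m (y m) + ∑ j ∈ Ico m k, calA A k (j + 1) (h j) := by
  rw [hy m hnm, map_add, map_sum, calA_comp_apply A hnm hmk, add_assoc,
    sum_congr rfl fun j hj => calA_comp_apply A (mem_Ico.mp hj).2 hmk (h j),
    sum_Ico_consecutive _ hnm hmk, hy k (hnm.trans hmk)]

namespace IsInvariantSplitting

variable {P : ℕ → X →L[ℝ] X} {B : ℕ → ℕ → X →L[ℝ] X}

lemma B_P_apply (hs : IsInvariantSplitting A P B) {m n : ℕ} (hnm : n ≤ m) (v : X) :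
    B m n (P m v) = 0 := by
  have hPP : P m (P m v) = P m v := congrArg (· v) (hs.proj m)
  have h := hs.B_calA m n hnm (B m n (P m v))
  rwa [hs.calA_B m n hnm, hPP, sub_self, map_zero, hs.P_B m n hnm, sub_zero, eq_comm] at h

lemma B_calA_sub_P_apply (hs : IsInvariantSplitting A P B) {n p m : ℕ} (hnp : n ≤ p)
    (hpm : p ≤ m) (v : X) : B m n (calA A m p (v - P p v)) = B p n v := by
  rw [← hs.calA_B p n hnp, calA_comp_apply A hnp hpm, hs.B_calA m n (hnp.trans hpm),
    hs.P_B p n hnp, sub_zero]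

lemma calA_B_apply_of_le (hs : IsInvariantSplitting A P B) {n p m : ℕ} (hnp : n ≤ p)
    (hpm : p ≤ m) (v : X) : calA A m n (B p n v) = calA A m p (v - P p v) := by
  rw [← hs.calA_B p n hnp, calA_comp_apply A hnp hpm]

lemma calA_B_apply_of_ge (hs : IsInvariantSplitting A P B) {n m p : ℕ} (hnm : n ≤ m)
    (hmp : m ≤ p) (v : X) : calA A m n (B p n v) = B p m v := by
  have hP : P m (calA A m n (B p n v)) = 0 := by
    rw [← ContinuousLinearMap.comp_apply, hs.comm m n hnm, ContinuousLinearMap.comp_apply,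
      hs.P_B p n (hnm.trans hmp), map_zero]
  have h := hs.B_calA p m hmp (calA A m n (B p n v))
  rwa [calA_comp_apply A hnm hmp, hs.calA_B p n (hnm.trans hmp), hP, sub_zero, map_sub,
    hs.B_P_apply hmp, sub_zero, eq_comm] at h

lemma sum_B_eq_of_graph_identity (hs : IsInvariantSplitting A P B) {n m : ℕ} (hnm : n ≤ m)
    {g : ℕ → X} {u v : X} (hu : P n u = 0)
    (h : v = calA A m n u + ∑ k ∈ Ico n m, calA A m (k + 1) (g k - P (k + 1) (g k))) :
    ∑ k ∈ Ico n m, B (k + 1) n (g k) = B m n v - u := by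
  rw [h, map_add, map_sum, hs.B_calA m n hnm, hu, sub_zero,
    sum_congr rfl fun k hk => hs.B_calA_sub_P_apply (by grind) (mem_Ico.mp hk).2 (g k)]
  abel

lemma hasSum_of_graph_identity [CompleteSpace X] (hs : IsInvariantSplitting A P B) {n : ℕ}
    {g v : ℕ → X} {u : X} (hu : P n u = 0)
    (h : ∀ m, n ≤ m → v m = calA A m n u + ∑ k ∈ Ico n m, calA A m (k + 1) (g k - P (k + 1) (g k)))
    (hg : Summable fun j => B (n + j + 1) n (g (n + j)))
    (hv : Tendsto (fun m => B m n (v m)) atTop (𝓝 0)) :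
    HasSum (fun j => B (n + j + 1) n (g (n + j))) (-u) := by
  have hpartial (N : ℕ) :
      ∑ j ∈ range N, B (n + j + 1) n (g (n + j)) = B (n + N) n (v (n + N)) - u := by
    rw [← hs.sum_B_eq_of_graph_identity (Nat.le_add_right n N) hu (h _ (Nat.le_add_right n N)),
      sum_Ico_eq_sum_range, Nat.add_sub_cancel_left]
  have hshift : Tendsto (fun N => B (n + N) n (v (n + N))) atTop (𝓝 0) := by
    simpa only [add_comm n] using (tendsto_add_atTop_iff_nat n).mpr hv
  rw [hg.hasSum_iff_tendsto_nat]
  simpa only [hpartial, zero_sub] using hshift.sub_const u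

lemma graph_identity_of_hasSum (hs : IsInvariantSplitting A P B) {n m : ℕ} (hnm : n ≤ m)
    {g : ℕ → X} {u v : X} (hu : HasSum (fun j => B (n + j + 1) n (g (n + j))) (-u))
    (hv : HasSum (fun j => B (m + j + 1) m (g (m + j))) (-v)) :
    v = calA A m n u + ∑ k ∈ Ico n m, calA A m (k + 1) (g k - P (k + 1) (g k)) := by
  have htail := (hasSum_nat_add_iff' (m - n)).mpr (hu.mapL (calA A m n))
  have hterms : (fun j => calA A m n (B (n + (j + (m - n)) + 1) n (g (n + (j + (m - n))))))
      = fun j => B (m + j + 1) m (g (m + j)) := by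
    funext j
    rw [show n + (j + (m - n)) = m + j by omega]
    exact hs.calA_B_apply_of_ge hnm (by omega) _
  have hhead : ∑ i ∈ range (m - n), calA A m n (B (n + i + 1) n (g (n + i)))
      = ∑ k ∈ Ico n m, calA A m (k + 1) (g k - P (k + 1) (g k)) := by
    rw [sum_Ico_eq_sum_range]
    exact sum_congr rfl fun i hi => hs.calA_B_apply_of_le (by omega) (by grind) _
  simp only [hterms, hhead, map_neg] at htail
  rw [← neg_inj, ← htail.unique hv]
  abel

end IsInvariantSplitting

end Evolution

lemma eq_zero_of_le_contraction {d w : ℕ → ℝ} {m : ℕ} {θ C : ℝ} (hθ0 : 0 ≤ θ) (hθ1 : θ < 1)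
    (hC0 : 0 ≤ C) (hd0 : ∀ k, 0 ≤ d k) (hdC : ∀ k, m ≤ k → d k ≤ C * w k)
    (hstep : ∀ M, 0 ≤ M → (∀ j, m ≤ j → d j ≤ M * w j) → ∀ k, m ≤ k → d k ≤ θ * M * w k)
    {k : ℕ} (hk : m ≤ k) : d k = 0 := by
  have hpow (i : ℕ) : ∀ k, m ≤ k → d k ≤ θ ^ i * C * w k := by
    induction i with
    | zero => simpa using hdC
    | succ i ih =>
      intro k hk
      simpa only [pow_succ', mul_assoc] using hstep _ (by positivity) ih k hk
  have hlim : Tendsto (fun i => θ ^ i * C * w k) atTop (𝓝 0) := by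
    simpa using ((tendsto_pow_atTop_nhds_zero_of_lt_one hθ0 hθ1).mul_const C).mul_const (w k)
  exact le_antisymm (ge_of_tendsto' hlim fun i => hpow i k hk) (hd0 k)

section Graph

variable {X : Type*} [NormedAddCommGroup X] [NormedSpace ℝ X] {P : ℕ → X →L[ℝ] X}

def fOnGraph (f : ℕ → X → X)
    (φ : ∀ n, LinearMap.range (P n : X →ₗ[ℝ] X) → LinearMap.ker (P n : X →ₗ[ℝ] X)) (k : ℕ)
    (u : LinearMap.range (P k : X →ₗ[ℝ] X)) : X :=
  f k ((u : X) + (φ k u : X))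

/-- The defining equation of `x^φ_{n,m}`. -/
def IsLyapunovPerronSolution (A : ℕ → X →L[ℝ] X) (f : ℕ → X → X)
    (φ : ∀ n, LinearMap.range (P n : X →ₗ[ℝ] X) → LinearMap.ker (P n : X →ₗ[ℝ] X)) (n : ℕ)
    (y : ∀ m, LinearMap.range (P n : X →ₗ[ℝ] X) → LinearMap.range (P m : X →ₗ[ℝ] X)) : Prop :=
  ∀ m, n ≤ m → ∀ ξ, (y m ξ : X) =
    calA A m n ξ + ∑ k ∈ Ico n m, calA A m (k + 1) (P (k + 1) (fOnGraph f φ k (y k ξ)))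

variable {f : ℕ → X → X} {L : ℕ → ℝ}
  {φ : ∀ n, LinearMap.range (P n : X →ₗ[ℝ] X) → LinearMap.ker (P n : X →ₗ[ℝ] X)}

lemma norm_phi_apply_le (hφ0 : ∀ n, φ n 0 = 0)
    (hφLip : ∀ n (ξ ξ' : LinearMap.range (P n : X →ₗ[ℝ] X)),
      ‖(φ n ξ : X) - (φ n ξ' : X)‖ ≤ ‖(ξ : X) - (ξ' : X)‖) (k : ℕ) (u) :
    ‖(φ k u : X)‖ ≤ ‖(u : X)‖ := by
  simpa [hφ0] using hφLip k u 0

lemma norm_fOnGraph_sub_le (hL0 : ∀ k, 0 ≤ L k)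
    (hLip : ∀ k (u v : X), ‖f k u - f k v‖ ≤ L k * ‖u - v‖)
    (hφLip : ∀ n (ξ ξ' : LinearMap.range (P n : X →ₗ[ℝ] X)),
      ‖(φ n ξ : X) - (φ n ξ' : X)‖ ≤ ‖(ξ : X) - (ξ' : X)‖) (k : ℕ) (u u') :
    ‖fOnGraph f φ k u - fOnGraph f φ k u'‖ ≤ 2 * L k * ‖(u : X) - (u' : X)‖ := by
  have hgraph : ‖((u : X) + (φ k u : X)) - ((u' : X) + (φ k u' : X))‖ ≤ 2 * ‖(u : X) - (u' : X)‖ :=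
    calc _ = ‖((u : X) - (u' : X)) + ((φ k u : X) - (φ k u' : X))‖ := by congr 1; abel
      _ ≤ ‖(u : X) - (u' : X)‖ + ‖(φ k u : X) - (φ k u' : X)‖ := norm_add_le _ _
      _ ≤ 2 * ‖(u : X) - (u' : X)‖ := by linarith [hφLip k u u']
  calc _ ≤ L k * ‖((u : X) + (φ k u : X)) - ((u' : X) + (φ k u' : X))‖ := hLip k _ _
    _ ≤ L k * (2 * ‖(u : X) - (u' : X)‖) := mul_le_mul_of_nonneg_left hgraph (hL0 k)
    _ = 2 * L k * ‖(u : X) - (u' : X)‖ := by ring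

lemma norm_fOnGraph_le (hL0 : ∀ k, 0 ≤ L k) (hf0 : ∀ k, f k 0 = 0)
    (hLip : ∀ k (u v : X), ‖f k u - f k v‖ ≤ L k * ‖u - v‖) (hφ0 : ∀ n, φ n 0 = 0)
    (hφLip : ∀ n (ξ ξ' : LinearMap.range (P n : X →ₗ[ℝ] X)),
      ‖(φ n ξ : X) - (φ n ξ' : X)‖ ≤ ‖(ξ : X) - (ξ' : X)‖) (k : ℕ) (u) :
    ‖fOnGraph f φ k u‖ ≤ 2 * L k * ‖(u : X)‖ := by
  simpa [fOnGraph, hφ0, hf0] using norm_fOnGraph_sub_le hL0 hLip hφLip k u 0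

end Graph

section Alpha

variable {a : ℕ → ℕ → ℝ} {L : ℕ → ℝ} {α : ℝ}

lemma alpha_nonneg (ha : ∀ m n, n ≤ m → 0 < a m n) (hL0 : ∀ k, 0 ≤ L k)
    (hα : IsLUB {r : ℝ | ∃ m n : ℕ, n < m ∧
      r = (∑ k ∈ Ico n m, a m (k + 1) * (a k n * L k)) / a m n} α) : 0 ≤ α := by
  refine le_trans ?_ (hα.1 ⟨1, 0, one_pos, rfl⟩)
  have := ha 1 1 le_rfl
  have := ha 0 0 le_rfl
  have := ha 1 0 zero_le_one
  have := hL0 0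
  simp only [Nat.Ico_zero_eq_range, range_one, sum_singleton, zero_add]
  positivity

lemma sum_Ico_le_alpha_mul (ha : ∀ m n, n ≤ m → 0 < a m n) (hL0 : ∀ k, 0 ≤ L k)
    (hα : IsLUB {r : ℝ | ∃ m n : ℕ, n < m ∧
      r = (∑ k ∈ Ico n m, a m (k + 1) * (a k n * L k)) / a m n} α)
    {n m k : ℕ} (hnm : n ≤ m) (hmk : m ≤ k) :
    ∑ j ∈ Ico m k, a k (j + 1) * (a j n * L j) ≤ α * a k n := by
  rcases hmk.eq_or_lt with rfl | hmk
  · simpa using mul_nonneg (alpha_nonneg ha hL0 hα) (ha m n hnm).le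
  have hsub : ∑ j ∈ Ico m k, a k (j + 1) * (a j n * L j)
      ≤ ∑ j ∈ Ico n k, a k (j + 1) * (a j n * L j) := by
    refine sum_le_sum_of_subset_of_nonneg (Ico_subset_Ico hnm le_rfl) fun j hj _ => ?_
    have := ha k (j + 1) (mem_Ico.mp hj).2
    have := ha j n (mem_Ico.mp hj).1
    have := hL0 j
    positivity
  exact hsub.trans ((div_le_iff₀ (ha k n (by omega))).mp (hα.1 ⟨k, n, by omega, rfl⟩))

end Alpha

section Cocycle

variable {X : Type*} [NormedAddCommGroup X] [NormedSpace ℝ X] {A P : ℕ → X →L[ℝ] X}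
  {f : ℕ → X → X} {L : ℕ → ℝ} {a : ℕ → ℕ → ℝ} {α : ℝ}
  {φ : ∀ n, LinearMap.range (P n : X →ₗ[ℝ] X) → LinearMap.ker (P n : X →ₗ[ℝ] X)}
  {x : ∀ n m, LinearMap.range (P n : X →ₗ[ℝ] X) → LinearMap.range (P m : X →ₗ[ℝ] X)}

lemma norm_le_abs_mul_of_le {C : ℝ} {n : ℕ} (ha : ∀ m n, n ≤ m → 0 < a m n)
    (hC : ∀ m, n ≤ m → ∀ ξ, ‖(x n m ξ : X)‖ ≤ C * (a m n * ‖(ξ : X)‖)) {m : ℕ} (hnm : n ≤ m)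
    (ξ) : ‖(x n m ξ : X)‖ ≤ |C| * ‖(ξ : X)‖ * a m n :=
  calc _ ≤ C * (a m n * ‖(ξ : X)‖) := hC m hnm ξ
    _ ≤ |C| * (a m n * ‖(ξ : X)‖) :=
      mul_le_mul_of_nonneg_right (le_abs_self C) (by have := ha m n hnm; positivity)
    _ = |C| * ‖(ξ : X)‖ * a m n := by ring

lemma lyapunovPerron_sub_eq_sum {n m : ℕ} (hnm : n ≤ m)
    (hxn : IsLyapunovPerronSolution A f φ n (x n)) (hxm : IsLyapunovPerronSolution A f φ m (x m))
    (ξ) {k : ℕ} (hk : m ≤ k) :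
    (x n k ξ : X) - (x m k (x n m ξ) : X) = ∑ j ∈ Ico m k, calA A k (j + 1) (P (j + 1)
      (fOnGraph f φ j (x n j ξ) - fOnGraph f φ j (x m j (x n m ξ)))) := by
  rw [calA_add_sum_restart (y := fun k => (x n k ξ : X)) (fun k hk => hxn k hk ξ) hnm hk,
    hxm k hk, add_sub_add_left_eq_sub, ← sum_sub_distrib]
  simp only [map_sub]

/-- Measured against the weight `a_{k,n} + a_{k,m}`, the difference of the two sides contracts by
the factor `2α`. -/
theorem lyapunovPerron_cocycle (ha : ∀ m n, n ≤ m → 0 < a m n)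
    (hD1 : ∀ m n, n ≤ m → ‖(calA A m n).comp (P n)‖ ≤ a m n) (hL0 : ∀ k, 0 ≤ L k)
    (hLip : ∀ k (u v : X), ‖f k u - f k v‖ ≤ L k * ‖u - v‖)
    (hφLip : ∀ n (ξ ξ' : LinearMap.range (P n : X →ₗ[ℝ] X)),
      ‖(φ n ξ : X) - (φ n ξ' : X)‖ ≤ ‖(ξ : X) - (ξ' : X)‖)
    (hα0 : 0 ≤ α) (h2α : 2 * α < 1)
    (hαsum : ∀ n m k, n ≤ m → m ≤ k → ∑ j ∈ Ico m k, a k (j + 1) * (a j n * L j) ≤ α * a k n)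
    {n m : ℕ} (hnm : n ≤ m)
    (hxn : IsLyapunovPerronSolution A f φ n (x n)) (hxm : IsLyapunovPerronSolution A f φ m (x m))
    {Cn Cm : ℝ} (hCn : ∀ k, n ≤ k → ∀ ξ, ‖(x n k ξ : X)‖ ≤ Cn * (a k n * ‖(ξ : X)‖))
    (hCm : ∀ k, m ≤ k → ∀ η, ‖(x m k η : X)‖ ≤ Cm * (a k m * ‖(η : X)‖))
    (ξ) {k : ℕ} (hk : m ≤ k) : x m k (x n m ξ) = x n k ξ := by
  set d : ℕ → ℝ := fun k => ‖(x n k ξ : X) - (x m k (x n m ξ) : X)‖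
  have hgrowth : ∀ k, m ≤ k →
      d k ≤ (|Cn| * ‖(ξ : X)‖ + |Cm| * ‖(x n m ξ : X)‖) * (a k n + a k m) := by
    intro k hk
    have hn := norm_le_abs_mul_of_le ha hCn (hnm.trans hk) ξ
    have hm := norm_le_abs_mul_of_le ha hCm hk (x n m ξ)
    have := ha k n (hnm.trans hk)
    have := ha k m hk
    have : 0 ≤ |Cn| * ‖(ξ : X)‖ := by positivity
    have : 0 ≤ |Cm| * ‖(x n m ξ : X)‖ := by positivity
    nlinarith [norm_sub_le (x n k ξ : X) (x m k (x n m ξ) : X)]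
  have hstep (M : ℝ) (hM0 : 0 ≤ M) (hM : ∀ j, m ≤ j → d j ≤ M * (a j n + a j m)) (k : ℕ)
      (hk : m ≤ k) : d k ≤ 2 * α * M * (a k n + a k m) :=
    calc d k ≤ ∑ j ∈ Ico m k, a k (j + 1) * (2 * L j * d j) := by
          rw [show d k = _ from congrArg norm (lyapunovPerron_sub_eq_sum hnm hxn hxm ξ hk)]
          refine norm_sum_le_of_le _ fun j hj => ?_
          have hj := mem_Ico.mp hj
          refine (((calA A k (j + 1)).comp (P (j + 1))).le_of_opNorm_le
            (hD1 k (j + 1) hj.2) _).trans (mul_le_mul_of_nonneg_left ?_ (ha k (j + 1) hj.2).le)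
          exact norm_fOnGraph_sub_le hL0 hLip hφLip j _ _
      _ ≤ ∑ j ∈ Ico m k, a k (j + 1) * (2 * L j * (M * (a j n + a j m))) := by
          refine sum_le_sum fun j hj => ?_
          have hj := mem_Ico.mp hj
          have := ha k (j + 1) hj.2
          have := hL0 j
          gcongr
          exact hM j hj.1
      _ = 2 * M * (∑ j ∈ Ico m k, a k (j + 1) * (a j n * L j)
            + ∑ j ∈ Ico m k, a k (j + 1) * (a j m * L j)) := by
          rw [← sum_add_distrib, mul_sum]
          exact sum_congr rfl fun j _ => by ring
      _ ≤ 2 * M * (α * a k n + α * a k m) := by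
          gcongr
          exacts [hαsum n m k hnm hk, hαsum m m k le_rfl hk]
      _ = 2 * α * M * (a k n + a k m) := by ring
  have hdk : d k = 0 := eq_zero_of_le_contraction (by positivity) h2α (by positivity)
    (fun _ => norm_nonneg _) hgrowth hstep hk
  exact (Subtype.ext (sub_eq_zero.mp (norm_eq_zero.mp hdk))).symm

end Cocycle

section Series

variable {X : Type*} [NormedAddCommGroup X] [NormedSpace ℝ X] {P : ℕ → X →L[ℝ] X}
  {B : ℕ → ℕ → X →L[ℝ] X} {f : ℕ → X → X} {L : ℕ → ℝ} {a b : ℕ → ℕ → ℝ}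
  {φ : ∀ n, LinearMap.range (P n : X →ₗ[ℝ] X) → LinearMap.ker (P n : X →ₗ[ℝ] X)}
  {x : ∀ n m, LinearMap.range (P n : X →ₗ[ℝ] X) → LinearMap.range (P m : X →ₗ[ℝ] X)}

lemma summable_B_fOnGraph [CompleteSpace X] (hD2 : ∀ m n, n ≤ m → ‖B m n‖ ≤ b m n)
    (hL0 : ∀ k, 0 ≤ L k) (hf0 : ∀ k, f k 0 = 0)
    (hLip : ∀ k (u v : X), ‖f k u - f k v‖ ≤ L k * ‖u - v‖) (hφ0 : ∀ n, φ n 0 = 0)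
    (hφLip : ∀ n (ξ ξ' : LinearMap.range (P n : X →ₗ[ℝ] X)),
      ‖(φ n ξ : X) - (φ n ξ' : X)‖ ≤ ‖(ξ : X) - (ξ' : X)‖) {n : ℕ}
    (hsum : Summable fun j => b (n + j + 1) n * (a (n + j) n * L (n + j))) {C : ℝ}
    (hC : ∀ m, n ≤ m → ∀ ξ, ‖(x n m ξ : X)‖ ≤ C * (a m n * ‖(ξ : X)‖)) (ξ) :
    Summable fun j => B (n + j + 1) n (fOnGraph f φ (n + j) (x n (n + j) ξ)) := by
  refine (hsum.mul_left (2 * C * ‖(ξ : X)‖)).of_norm_bounded fun j => ?_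
  have hb : 0 ≤ b (n + j + 1) n := (norm_nonneg _).trans (hD2 _ _ (by omega))
  have := hL0 (n + j)
  calc _ ≤ b (n + j + 1) n * ‖fOnGraph f φ (n + j) (x n (n + j) ξ)‖ :=
        (B _ _).le_of_opNorm_le (hD2 _ _ (by omega)) _
    _ ≤ b (n + j + 1) n * (2 * L (n + j) * ‖(x n (n + j) ξ : X)‖) := by
        gcongr
        exact norm_fOnGraph_le hL0 hf0 hLip hφ0 hφLip _ _
    _ ≤ b (n + j + 1) n * (2 * L (n + j) * (C * (a (n + j) n * ‖(ξ : X)‖))) := by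
        gcongr
        exact hC _ (by omega) ξ
    _ = _ := by ring

lemma tendsto_B_phi_atTop (hD2 : ∀ m n, n ≤ m → ‖B m n‖ ≤ b m n) (hφ0 : ∀ n, φ n 0 = 0)
    (hφLip : ∀ n (ξ ξ' : LinearMap.range (P n : X →ₗ[ℝ] X)),
      ‖(φ n ξ : X) - (φ n ξ' : X)‖ ≤ ‖(ξ : X) - (ξ' : X)‖) {n : ℕ}
    (hlim : Tendsto (fun m => a m n * b m n) atTop (𝓝 0)) {C : ℝ}
    (hC : ∀ m, n ≤ m → ∀ ξ, ‖(x n m ξ : X)‖ ≤ C * (a m n * ‖(ξ : X)‖)) (ξ) :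
    Tendsto (fun m => B m n (φ m (x n m ξ) : X)) atTop (𝓝 0) := by
  rw [tendsto_zero_iff_norm_tendsto_zero]
  refine squeeze_zero' (Eventually.of_forall fun _ => norm_nonneg _)
    (eventually_atTop.mpr ⟨n, fun m hm => ?_⟩) (by simpa using hlim.const_mul (C * ‖(ξ : X)‖))
  have hb : 0 ≤ b m n := (norm_nonneg _).trans (hD2 m n hm)
  calc _ ≤ b m n * ‖(φ m (x n m ξ) : X)‖ := (B m n).le_of_opNorm_le (hD2 m n hm) _
    _ ≤ b m n * (C * (a m n * ‖(ξ : X)‖)) := by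
        gcongr
        exact (norm_phi_apply_le hφ0 hφLip m _).trans (hC m hm ξ)
    _ = C * ‖(ξ : X)‖ * (a m n * b m n) := by ring

end Series

theorem graph_identity_iff_series_identity_general
    {X : Type*} [NormedAddCommGroup X] [NormedSpace ℝ X] [CompleteSpace X]
    (A P : ℕ → X →L[ℝ] X) (B : ℕ → ℕ → X →L[ℝ] X) (a b : ℕ → ℕ → ℝ)
    -- the bounds are positive
    (ha : ∀ m n : ℕ, n ≤ m → 0 < a m n)
    -- the `P n` are bounded projections
    (hproj : ∀ n, (P n).comp (P n) = P n)
    -- (S1) : `P m ∘ 𝒜_{m,n} = 𝒜_{m,n} ∘ P n`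
    (hS1 : ∀ m n : ℕ, n ≤ m → (P m).comp (calA A m n) = (calA A m n).comp (P n))
    -- (S2)/(S3) : `B m n` is the operator `(𝒜_{m,n}|_{F n})⁻¹ ∘ Q m`, where `Q m = Id - P m`;
    -- its existence encodes that `𝒜_{m,n}` maps `F n = ker (P n)` bijectively onto `F m`
    (hB1 : ∀ m n : ℕ, n ≤ m → ∀ x : X, calA A m n (B m n x) = x - P m x)
    (hB2 : ∀ m n : ℕ, n ≤ m → ∀ x : X, B m n (calA A m n x) = x - P n x)
    (hBF : ∀ m n : ℕ, n ≤ m → ∀ x : X, P n (B m n x) = 0)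
    -- (D1) : `‖𝒜_{m,n} P n‖ ≤ a m n`
    (hD1 : ∀ m n : ℕ, n ≤ m → ‖(calA A m n).comp (P n)‖ ≤ a m n)
    -- (D2) : `‖(𝒜_{m,n}|_{F n})⁻¹ Q m‖ ≤ b m n`
    (hD2 : ∀ m n : ℕ, n ≤ m → ‖B m n‖ ≤ b m n)
    -- the perturbations `f k` vanish at `0` and are Lipschitz with constant `L k`
    (f : ℕ → X → X) (L : ℕ → ℝ) (hL0 : ∀ k, 0 ≤ L k) (hf0 : ∀ k, f k 0 = 0)
    (hLip : ∀ (k : ℕ) (u v : X), ‖f k u - f k v‖ ≤ L k * ‖u - v‖)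
    -- `α = sup_{m>n} (1/a_{m,n}) ∑_{k=n}^{m-1} a_{m,k+1} a_{k,n} Lip(f k) < ∞`
    (α : ℝ)
    (hα : IsLUB {r : ℝ | ∃ m n : ℕ, n < m ∧
      r = (∑ k ∈ Finset.Ico n m, a m (k + 1) * (a k n * L k)) / a m n} α)
    -- `β = sup_n ∑_{k=n}^{∞} b_{k+1,n} a_{k,n} Lip(f k) < ∞`
    (β : ℝ)
    (hsum : ∀ n : ℕ, Summable fun j : ℕ => b (n + j + 1) n * (a (n + j) n * L (n + j)))
    -- `2α + max {2β, √β} < 1`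
    (hcond : 2 * α + max (2 * β) (Real.sqrt β) < 1)
    -- `lim_{m→∞} a_{m,n} b_{m,n} = 0` for every `n`
    (hlim : ∀ n : ℕ, Filter.Tendsto (fun m : ℕ => a m n * b m n) Filter.atTop (nhds 0))
    (φ : ∀ n : ℕ, LinearMap.range (P n : X →ₗ[ℝ] X) → LinearMap.ker (P n : X →ₗ[ℝ] X))
    (hφ : ((∀ n, φ n 0 = 0) ∧
      ∀ (n : ℕ) (ξ ξ' : LinearMap.range (P n : X →ₗ[ℝ] X)),
        ‖(φ n ξ : X) - (φ n ξ' : X)‖ ≤ ‖(ξ : X) - (ξ' : X)‖))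
    (x : ∀ n m : ℕ, LinearMap.range (P n : X →ₗ[ℝ] X) → LinearMap.range (P m : X →ₗ[ℝ] X))
    (hx : ∀ n : ℕ, ((∀ m : ℕ, n ≤ m → x n m 0 = 0) ∧
      (∃ C : ℝ, ∀ m : ℕ, n ≤ m → ∀ ξ : LinearMap.range (P n : X →ₗ[ℝ] X),
        ‖(x n m ξ : X)‖ ≤ C * (a m n * ‖(ξ : X)‖)) ∧
      (∀ m : ℕ, n ≤ m → ∀ ξ : LinearMap.range (P n : X →ₗ[ℝ] X),
        (x n m ξ : X) = calA A m n (ξ : X) +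
          ∑ k ∈ Finset.Ico n m,
            calA A m (k + 1) (P (k + 1) (f k ((x n k ξ : X) + (φ k (x n k ξ) : X)))))))
    :
    -- (a) the identity (15) holds
    (∀ n m : ℕ, n ≤ m → ∀ ξ : LinearMap.range (P n : X →ₗ[ℝ] X),
        (φ m (x n m ξ) : X) = calA A m n ((φ n ξ : X)) +
          ∑ k ∈ Finset.Ico n m,
            calA A m (k + 1)
              (f k ((x n k ξ : X) + (φ k (x n k ξ) : X)) -
                P (k + 1) (f k ((x n k ξ : X) + (φ k (x n k ξ) : X))))) ↔
    -- (b) `φ n ξ = - ∑_{k=n}^{∞} (𝒜_{k+1,n}|_{F n})⁻¹ Q_{k+1} f k (x_k ξ + φ_k(x_k ξ))`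
    (∀ n : ℕ, ∀ ξ : LinearMap.range (P n : X →ₗ[ℝ] X),
        HasSum
          (fun j : ℕ => B (n + j + 1) n (f (n + j)
          ((x n (n + j) ξ : X) + (φ (n + j) (x n (n + j) ξ) : X))))
          (-(φ n ξ : X))) := by
  obtain ⟨hφ0, hφLip⟩ := hφ
  have hs : IsInvariantSplitting A P B := ⟨hproj, hS1, hB1, hB2, hBF⟩
  have hker (n : ℕ) (ξ) : P n (φ n ξ : X) = 0 := LinearMap.mem_ker.mp (φ n ξ).2
  constructor
  · intro hgraph n ξ
    obtain ⟨C, hC⟩ := (hx n).2.1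
    exact hs.hasSum_of_graph_identity (g := fun k => fOnGraph f φ k (x n k ξ))
      (v := fun m => (φ m (x n m ξ) : X)) (hker n ξ) (fun m hm => hgraph n m hm ξ)
      (summable_B_fOnGraph hD2 hL0 hf0 hLip hφ0 hφLip (hsum n) hC ξ)
      (tendsto_B_phi_atTop hD2 hφ0 hφLip (hlim n) hC ξ)
  · intro hseries n m hnm ξ
    have hα0 := alpha_nonneg ha hL0 hα
    have h2α : 2 * α < 1 := by linarith [Real.sqrt_nonneg β, le_max_right (2 * β) (Real.sqrt β)]
    have hcocycle (k : ℕ) (hk : m ≤ k) : x m k (x n m ξ) = x n k ξ :=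
      lyapunovPerron_cocycle ha hD1 hL0 hLip hφLip hα0 h2α
        (fun _ _ _ => sum_Ico_le_alpha_mul ha hL0 hα) hnm (hx n).2.2 (hx m).2.2
        (hx n).2.1.choose_spec (hx m).2.1.choose_spec ξ hk
    refine hs.graph_identity_of_hasSum (g := fun k => fOnGraph f φ k (x n k ξ)) hnm
      (hseries n ξ) ?_
    simpa only [fOnGraph, hcocycle _ (Nat.le_add_right m _)] using hseries m (x n m ξ)

/-- Lemma 3.2 : equivalence between the graph-invariance identity and the
fixed-point identity for `φ`. -/
theorem graph_identity_iff_series_identity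
    {X : Type*} [NormedAddCommGroup X] [NormedSpace ℝ X] [CompleteSpace X]
    (A P : ℕ → X →L[ℝ] X) (B : ℕ → ℕ → X →L[ℝ] X) (a b : ℕ → ℕ → ℝ)
    -- the bounds are positive
    (ha : ∀ m n : ℕ, n ≤ m → 0 < a m n) (hb : ∀ m n : ℕ, n ≤ m → 0 < b m n)
    -- the `P n` are bounded projections
    (hproj : ∀ n, (P n).comp (P n) = P n)
    -- (S1) : `P m ∘ 𝒜_{m,n} = 𝒜_{m,n} ∘ P n`
    (hS1 : ∀ m n : ℕ, n ≤ m → (P m).comp (calA A m n) = (calA A m n).comp (P n))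
    -- (S2)/(S3) : `B m n` is the operator `(𝒜_{m,n}|_{F n})⁻¹ ∘ Q m`, where `Q m = Id - P m`;
    -- its existence encodes that `𝒜_{m,n}` maps `F n = ker (P n)` bijectively onto `F m`
    (hB1 : ∀ m n : ℕ, n ≤ m → ∀ x : X, calA A m n (B m n x) = x - P m x)
    (hB2 : ∀ m n : ℕ, n ≤ m → ∀ x : X, B m n (calA A m n x) = x - P n x)
    (hBF : ∀ m n : ℕ, n ≤ m → ∀ x : X, P n (B m n x) = 0)
    -- (D1) : `‖𝒜_{m,n} P n‖ ≤ a m n`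
    (hD1 : ∀ m n : ℕ, n ≤ m → ‖(calA A m n).comp (P n)‖ ≤ a m n)
    -- (D2) : `‖(𝒜_{m,n}|_{F n})⁻¹ Q m‖ ≤ b m n`
    (hD2 : ∀ m n : ℕ, n ≤ m → ‖B m n‖ ≤ b m n)
    -- the perturbations `f k` vanish at `0` and are Lipschitz with constant `L k`
    (f : ℕ → X → X) (L : ℕ → ℝ) (hL0 : ∀ k, 0 ≤ L k) (hf0 : ∀ k, f k 0 = 0)
    (hLip : ∀ (k : ℕ) (u v : X), ‖f k u - f k v‖ ≤ L k * ‖u - v‖)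
    -- `α = sup_{m>n} (1/a_{m,n}) ∑_{k=n}^{m-1} a_{m,k+1} a_{k,n} Lip(f k) < ∞`
    (α : ℝ)
    (hα : IsLUB {r : ℝ | ∃ m n : ℕ, n < m ∧
      r = (∑ k ∈ Finset.Ico n m, a m (k + 1) * (a k n * L k)) / a m n} α)
    -- `β = sup_n ∑_{k=n}^{∞} b_{k+1,n} a_{k,n} Lip(f k) < ∞`
    (β : ℝ)
    (hsum : ∀ n : ℕ, Summable fun j : ℕ => b (n + j + 1) n * (a (n + j) n * L (n + j)))
    (hβ : IsLUB {r : ℝ | ∃ n : ℕ,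
      r = ∑' j : ℕ, b (n + j + 1) n * (a (n + j) n * L (n + j))} β)
    -- `2α + max {2β, √β} < 1`
    (hcond : 2 * α + max (2 * β) (Real.sqrt β) < 1)
    -- `lim_{m→∞} a_{m,n} b_{m,n} = 0` for every `n`
    (hlim : ∀ n : ℕ, Filter.Tendsto (fun m : ℕ => a m n * b m n) Filter.atTop (nhds 0))
    (φ : ∀ n : ℕ, LinearMap.range (P n : X →ₗ[ℝ] X) → LinearMap.ker (P n : X →ₗ[ℝ] X))
    (hφ : ((∀ n, φ n 0 = 0) ∧
      ∀ (n : ℕ) (ξ ξ' : LinearMap.range (P n : X →ₗ[ℝ] X)),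
        ‖(φ n ξ : X) - (φ n ξ' : X)‖ ≤ ‖(ξ : X) - (ξ' : X)‖))
    (x : ∀ n m : ℕ, LinearMap.range (P n : X →ₗ[ℝ] X) → LinearMap.range (P m : X →ₗ[ℝ] X))
    (hx : ∀ n : ℕ, ((∀ m : ℕ, n ≤ m → x n m 0 = 0) ∧
      (∃ C : ℝ, ∀ m : ℕ, n ≤ m → ∀ ξ : LinearMap.range (P n : X →ₗ[ℝ] X),
        ‖(x n m ξ : X)‖ ≤ C * (a m n * ‖(ξ : X)‖)) ∧
      (∀ m : ℕ, n ≤ m → ∀ ξ : LinearMap.range (P n : X →ₗ[ℝ] X),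
        (x n m ξ : X) = calA A m n (ξ : X) +
          ∑ k ∈ Finset.Ico n m,
            calA A m (k + 1) (P (k + 1) (f k ((x n k ξ : X) + (φ k (x n k ξ) : X)))))))
    :
    -- (a) the identity (15) holds
    (∀ n m : ℕ, n ≤ m → ∀ ξ : LinearMap.range (P n : X →ₗ[ℝ] X),
        (φ m (x n m ξ) : X) = calA A m n ((φ n ξ : X)) +
          ∑ k ∈ Finset.Ico n m,
            calA A m (k + 1)
              (f k ((x n k ξ : X) + (φ k (x n k ξ) : X)) -
                P (k + 1) (f k ((x n k ξ : X) + (φ k (x n k ξ) : X))))) ↔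
    -- (b) `φ n ξ = - ∑_{k=n}^{∞} (𝒜_{k+1,n}|_{F n})⁻¹ Q_{k+1} f k (x_k ξ + φ_k(x_k ξ))`
    (∀ n : ℕ, ∀ ξ : LinearMap.range (P n : X →ₗ[ℝ] X),
        HasSum
          (fun j : ℕ => B (n + j + 1) n (f (n + j)
          ((x n (n + j) ξ : X) + (φ (n + j) (x n (n + j) ξ) : X))))
          (-(φ n ξ : X))) :=
  graph_identity_iff_series_identity_general A P B a b ha hproj hS1 hB1 hB2 hBF hD1 hD2 f L hL0 hf0
    hLip α hα β hsum hcond hlim φ hφ x hx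
end

section
/- Suppose x_{m+1} = A_m x_m admits a general dichotomy with bounds (a_{m,n}) and (b_{m,n}), the f_m are Lipschitz with f_m(0)=0, α < +∞, β < +∞, and 2α + max{2β, √β} < 1. Then for every φ ∈ 𝒳, every n ∈ ℕ and every ξ ∈ E_n, the series Σ_{k=n}^{∞} ‖(𝒜_{k+1,n}|_{F_n})^{−1} Q_{k+1} f_k(x^φ_{n,k}(ξ) + φ_k(x^φ_{n,k}(ξ)))‖ converges and its sum is at most 2β ‖ξ‖ ‖x^φ‖_n. -/
theorem exists_hasSum_le_mul_of_le_mul {ι : Type*} {g c : ι → ℝ} {C β : ℝ} (hC : 0 ≤ C)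
    (hg : ∀ i, 0 ≤ g i) (hgc : ∀ i, g i ≤ C * c i) (hc : Summable c) (hcβ : ∑' i, c i ≤ β) :
    ∃ S, HasSum g S ∧ S ≤ C * β := by
  have hCc : Summable fun i => C * c i := hc.mul_left C
  have hg_summable : Summable g := .of_nonneg_of_le hg hgc hCc
  refine ⟨∑' i, g i, hg_summable.hasSum, ?_⟩
  calc ∑' i, g i ≤ ∑' i, C * c i := hg_summable.tsum_le_tsum hgc hCc
    _ = C * ∑' i, c i := tsum_mul_left
    _ ≤ C * β := mul_le_mul_of_nonneg_left hcβ hC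

theorem norm_apply_lipschitz_add_le {𝕜 E F G : Type*} [NontriviallyNormedField 𝕜]
    [SeminormedAddCommGroup E] [SeminormedAddCommGroup F] [SeminormedAddCommGroup G]
    [NormedSpace 𝕜 F] [NormedSpace 𝕜 G] {T : F →L[𝕜] G} {g : E → F} {b L r : ℝ}
    (hT : ‖T‖ ≤ b) (hL : 0 ≤ L) (hg0 : g 0 = 0) (hg : ∀ u v, ‖g u - g v‖ ≤ L * ‖u - v‖)
    {u w : E} (hu : ‖u‖ ≤ r) (hw : ‖w‖ ≤ ‖u‖) :
    ‖T (g (u + w))‖ ≤ b * (L * (2 * r)) := by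
  have hgu : ‖g (u + w)‖ ≤ L * ‖u + w‖ := by simpa [hg0] using hg (u + w) 0
  have huw : ‖u + w‖ ≤ 2 * r := by linarith [norm_add_le u w]
  calc ‖T (g (u + w))‖ ≤ ‖T‖ * ‖g (u + w)‖ := T.le_opNorm _
    _ ≤ b * (L * (2 * r)) := by
      gcongr
      · exact (norm_nonneg T).trans hT
      · exact hgu.trans (mul_le_mul_of_nonneg_left huw hL)

theorem series_abs_convergent_general
    {X : Type*} [NormedAddCommGroup X] [NormedSpace ℝ X]
    (P : ℕ → X →L[ℝ] X) (B : ℕ → ℕ → X →L[ℝ] X) (a b : ℕ → ℕ → ℝ)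
    -- the bounds are positive
    (ha : ∀ m n : ℕ, n ≤ m → 0 < a m n)
    -- (D2) : `‖(𝒜_{m,n}|_{F n})⁻¹ Q m‖ ≤ b m n`
    (hD2 : ∀ m n : ℕ, n ≤ m → ‖B m n‖ ≤ b m n)
    -- the perturbations `f k` vanish at `0` and are Lipschitz with constant `L k`
    (f : ℕ → X → X) (L : ℕ → ℝ) (hL0 : ∀ k, 0 ≤ L k) (hf0 : ∀ k, f k 0 = 0)
    (hLip : ∀ (k : ℕ) (u v : X), ‖f k u - f k v‖ ≤ L k * ‖u - v‖)
    -- `β = sup_n ∑_{k=n}^{∞} b_{k+1,n} a_{k,n} Lip(f k) < ∞`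
    (β : ℝ)
    (hsum : ∀ n : ℕ, Summable fun j : ℕ => b (n + j + 1) n * (a (n + j) n * L (n + j)))
    (hβ : IsLUB {r : ℝ | ∃ n : ℕ,
      r = ∑' j : ℕ, b (n + j + 1) n * (a (n + j) n * L (n + j))} β)
    (φ : ∀ n : ℕ, LinearMap.range (P n : X →ₗ[ℝ] X) → LinearMap.ker (P n : X →ₗ[ℝ] X))
    (hφ : ((∀ n, φ n 0 = 0) ∧
      ∀ (n : ℕ) (ξ ξ' : LinearMap.range (P n : X →ₗ[ℝ] X)),
        ‖(φ n ξ : X) - (φ n ξ' : X)‖ ≤ ‖(ξ : X) - (ξ' : X)‖))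
    (n : ℕ) (x : ∀ m : ℕ, LinearMap.range (P n : X →ₗ[ℝ] X) → LinearMap.range (P m : X →ₗ[ℝ] X))
    -- `N` is an upper bound for `‖x^φ‖_n`
    (N : ℝ)
    (hN : ∀ m : ℕ, n ≤ m → ∀ ξ : LinearMap.range (P n : X →ₗ[ℝ] X),
      ‖(x m ξ : X)‖ ≤ N * (a m n * ‖(ξ : X)‖)) :
    ∀ ξ : LinearMap.range (P n : X →ₗ[ℝ] X),
      ∃ S : ℝ,
        HasSum
          (fun j : ℕ => ‖B (n + j + 1) n (f (n + j)
          ((x (n + j) ξ : X) + (φ (n + j) (x (n + j) ξ) : X)))‖)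
          S ∧
        S ≤ 2 * β * (‖(ξ : X)‖ * N) := by
  intro ξ
  have hξN : 0 ≤ ‖(ξ : X)‖ * N := by
    have h := (norm_nonneg _).trans (hN n le_rfl ξ)
    rw [mul_left_comm, mul_comm N] at h
    exact nonneg_of_mul_nonneg_right h (ha n n le_rfl)
  have hterm : ∀ j, ‖B (n + j + 1) n (f (n + j)
      ((x (n + j) ξ : X) + (φ (n + j) (x (n + j) ξ) : X)))‖ ≤
        2 * (‖(ξ : X)‖ * N) * (b (n + j + 1) n * (a (n + j) n * L (n + j))) := by
    intro j
    have hφx : ‖(φ (n + j) (x (n + j) ξ) : X)‖ ≤ ‖(x (n + j) ξ : X)‖ := by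
      simpa [hφ.1] using hφ.2 (n + j) (x (n + j) ξ) 0
    refine (norm_apply_lipschitz_add_le (hD2 _ _ (by omega)) (hL0 _) (hf0 _) (hLip _)
      (hN _ (Nat.le_add_right n j) ξ) hφx).trans_eq ?_
    ring
  obtain ⟨S, hS, hSle⟩ := exists_hasSum_le_mul_of_le_mul (by positivity)
    (fun _ => norm_nonneg _) hterm (hsum n) (hβ.1 ⟨n, rfl⟩)
  exact ⟨S, hS, hSle.trans_eq (by ring)⟩

/-- The series in Lemma 3.2 converges absolutely, with sum of norms at most
`2 β ‖ξ‖ ‖x^φ‖_n`. -/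
theorem series_abs_convergent
    {X : Type*} [NormedAddCommGroup X] [NormedSpace ℝ X] [CompleteSpace X]
    (A P : ℕ → X →L[ℝ] X) (B : ℕ → ℕ → X →L[ℝ] X) (a b : ℕ → ℕ → ℝ)
    -- the bounds are positive
    (ha : ∀ m n : ℕ, n ≤ m → 0 < a m n) (hb : ∀ m n : ℕ, n ≤ m → 0 < b m n)
    -- the `P n` are bounded projections
    (hproj : ∀ n, (P n).comp (P n) = P n)
    -- (S1) : `P m ∘ 𝒜_{m,n} = 𝒜_{m,n} ∘ P n`
    (hS1 : ∀ m n : ℕ, n ≤ m → (P m).comp (calA A m n) = (calA A m n).comp (P n))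
    -- (S2)/(S3) : `B m n` is the operator `(𝒜_{m,n}|_{F n})⁻¹ ∘ Q m`, where `Q m = Id - P m`;
    -- its existence encodes that `𝒜_{m,n}` maps `F n = ker (P n)` bijectively onto `F m`
    (hB1 : ∀ m n : ℕ, n ≤ m → ∀ x : X, calA A m n (B m n x) = x - P m x)
    (hB2 : ∀ m n : ℕ, n ≤ m → ∀ x : X, B m n (calA A m n x) = x - P n x)
    (hBF : ∀ m n : ℕ, n ≤ m → ∀ x : X, P n (B m n x) = 0)
    -- (D1) : `‖𝒜_{m,n} P n‖ ≤ a m n`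
    (hD1 : ∀ m n : ℕ, n ≤ m → ‖(calA A m n).comp (P n)‖ ≤ a m n)
    -- (D2) : `‖(𝒜_{m,n}|_{F n})⁻¹ Q m‖ ≤ b m n`
    (hD2 : ∀ m n : ℕ, n ≤ m → ‖B m n‖ ≤ b m n)
    -- the perturbations `f k` vanish at `0` and are Lipschitz with constant `L k`
    (f : ℕ → X → X) (L : ℕ → ℝ) (hL0 : ∀ k, 0 ≤ L k) (hf0 : ∀ k, f k 0 = 0)
    (hLip : ∀ (k : ℕ) (u v : X), ‖f k u - f k v‖ ≤ L k * ‖u - v‖)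
    -- `α = sup_{m>n} (1/a_{m,n}) ∑_{k=n}^{m-1} a_{m,k+1} a_{k,n} Lip(f k) < ∞`
    (α : ℝ)
    (hα : IsLUB {r : ℝ | ∃ m n : ℕ, n < m ∧
      r = (∑ k ∈ Finset.Ico n m, a m (k + 1) * (a k n * L k)) / a m n} α)
    -- `β = sup_n ∑_{k=n}^{∞} b_{k+1,n} a_{k,n} Lip(f k) < ∞`
    (β : ℝ)
    (hsum : ∀ n : ℕ, Summable fun j : ℕ => b (n + j + 1) n * (a (n + j) n * L (n + j)))
    (hβ : IsLUB {r : ℝ | ∃ n : ℕ,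
      r = ∑' j : ℕ, b (n + j + 1) n * (a (n + j) n * L (n + j))} β)
    -- `2α + max {2β, √β} < 1`
    (hcond : 2 * α + max (2 * β) (Real.sqrt β) < 1)
    (φ : ∀ n : ℕ, LinearMap.range (P n : X →ₗ[ℝ] X) → LinearMap.ker (P n : X →ₗ[ℝ] X))
    (hφ : ((∀ n, φ n 0 = 0) ∧
      ∀ (n : ℕ) (ξ ξ' : LinearMap.range (P n : X →ₗ[ℝ] X)),
        ‖(φ n ξ : X) - (φ n ξ' : X)‖ ≤ ‖(ξ : X) - (ξ' : X)‖))
    (n : ℕ) (x : ∀ m : ℕ, LinearMap.range (P n : X →ₗ[ℝ] X) → LinearMap.range (P m : X →ₗ[ℝ] X))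
    (hx : ((∀ m : ℕ, n ≤ m → x m 0 = 0) ∧
      (∃ C : ℝ, ∀ m : ℕ, n ≤ m → ∀ ξ : LinearMap.range (P n : X →ₗ[ℝ] X),
        ‖(x m ξ : X)‖ ≤ C * (a m n * ‖(ξ : X)‖)) ∧
      (∀ m : ℕ, n ≤ m → ∀ ξ : LinearMap.range (P n : X →ₗ[ℝ] X),
        (x m ξ : X) = calA A m n (ξ : X) +
          ∑ k ∈ Finset.Ico n m,
            calA A m (k + 1) (P (k + 1) (f k ((x k ξ : X) + (φ k (x k ξ) : X)))))))
    -- `N` is an upper bound for `‖x^φ‖_n`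
    (N : ℝ)
    (hN : ∀ m : ℕ, n ≤ m → ∀ ξ : LinearMap.range (P n : X →ₗ[ℝ] X),
      ‖(x m ξ : X)‖ ≤ N * (a m n * ‖(ξ : X)‖)) :
    ∀ ξ : LinearMap.range (P n : X →ₗ[ℝ] X),
      ∃ S : ℝ,
        HasSum
          (fun j : ℕ => ‖B (n + j + 1) n (f (n + j)
          ((x (n + j) ξ : X) + (φ (n + j) (x (n + j) ξ) : X)))‖)
          S ∧
        S ≤ 2 * β * (‖(ξ : X)‖ * N) :=
  series_abs_convergent_general P B a b ha hD2 f L hL0 hf0 hLip β hsum hβ φ hφ n x N hN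
end
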